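/- arXiv:2505.13548 — 2 statements merged into one kernel-verified Lean document; each statement's English description precedes it below -/
import Mathlib

section
/- (Intertwining identities G₊∘E∘W⁻¹ = Ĩ = W·(E∘G₋).) For every integrable h : α → ℝ and every x ∈ α: (i) G₊( E( W⁻¹·h ) )(x) = h(x) − ⟨h⟩; (ii) W(x) · E( G₋ h )(x) = h(x) − ⟨h⟩. -/
/-!
Everything rests on the pointwise identity `W·E g = W g + ⟨g⟩ W − ⟨W g⟩`.
For `g = W⁻¹ h` it gives `W·E g = (h − ⟨h⟩) + ⟨W⁻¹ h⟩ W`; since `h − ⟨h⟩` has integral zero,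
the `W`-weighted mean that `G₊` subtracts is exactly `⟨W⁻¹ h⟩`, leaving `h − ⟨h⟩`.
For `g = G₋ h` one has `∫ g = 0` and `W g = h − λ` with `λ` constant, so
`W·E g = (h − λ) − ⟨h − λ⟩ = h − ⟨h⟩`.
-/

open MeasureTheory

/-- Total (coordinate) volume `V := μ(α)` as a real number. -/
noncomputable def totalVol {α : Type*} [MeasurableSpace α] (μ : Measure α) : ℝ :=
  (μ Set.univ).toReal

/-- Spatial average `⟨f⟩ := (1/V) ∫ f dμ`. -/
noncomputable def avg {α : Type*} [MeasurableSpace α] (μ : Measure α) (f : α → ℝ) : ℝ :=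
  (totalVol μ)⁻¹ * ∫ x, f x ∂μ

/-- The delocalization operator `E`:
`(E g)(x) = g(x) + ⟨g⟩ − W(x)⁻¹ ⟨W·g⟩`. -/
noncomputable def opE {α : Type*} [MeasurableSpace α] (μ : Measure α) (W : α → ℝ)
    (g : α → ℝ) : α → ℝ :=
  fun x => g x + avg μ g - (W x)⁻¹ * avg μ (fun y => W y * g y)

/-- The operator `E⁻¹`:
`(E⁻¹ h)(x) = h(x) − W(x)⁻¹ (∫h)/(∫W⁻¹) − (∫W·h)/(∫W) + 2 W(x)⁻¹ V (∫W·h)/((∫W⁻¹)(∫W))`. -/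
noncomputable def opEinv {α : Type*} [MeasurableSpace α] (μ : Measure α) (W : α → ℝ)
    (h : α → ℝ) : α → ℝ :=
  fun x => h x
    - (W x)⁻¹ * (∫ y, h y ∂μ) / (∫ y, (W y)⁻¹ ∂μ)
    - (∫ y, W y * h y ∂μ) / (∫ y, W y ∂μ)
    + 2 * (W x)⁻¹ * totalVol μ * (∫ y, W y * h y ∂μ)
        / ((∫ y, (W y)⁻¹ ∂μ) * (∫ y, W y ∂μ))

/-- The projector-type operator `G₊`:
`(G₊ h)(x) = W(x)·h(x) − W(x)·(∫W·h)/(∫W)`. -/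
noncomputable def opGplus {α : Type*} [MeasurableSpace α] (μ : Measure α) (W : α → ℝ)
    (h : α → ℝ) : α → ℝ :=
  fun x => W x * h x - W x * (∫ y, W y * h y ∂μ) / (∫ y, W y ∂μ)

/-- The projector-type operator `G₋`:
`(G₋ h)(x) = W(x)⁻¹·h(x) − W(x)⁻¹·(∫W⁻¹·h)/(∫W⁻¹)`. -/
noncomputable def opGminus {α : Type*} [MeasurableSpace α] (μ : Measure α) (W : α → ℝ)
    (h : α → ℝ) : α → ℝ :=
  fun x => (W x)⁻¹ * h x - (W x)⁻¹ * (∫ y, (W y)⁻¹ * h y ∂μ) / (∫ y, (W y)⁻¹ ∂μ)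

section

variable {α : Type*} [MeasurableSpace α] {μ : Measure α}

lemma integral_const_eq_totalVol_mul (b : ℝ) : ∫ _, b ∂μ = totalVol μ * b := by
  rw [integral_const, smul_eq_mul, measureReal_def, totalVol]

lemma avg_sub_const [IsFiniteMeasure μ] (hV : totalVol μ ≠ 0) {f : α → ℝ}
    (hf : Integrable f μ) (b : ℝ) : avg μ (fun x => f x - b) = avg μ f - b := by
  rw [avg, avg, integral_sub hf (integrable_const b), integral_const_eq_totalVol_mul, mul_sub,
    inv_mul_cancel_left₀ hV]

lemma integral_sub_avg [IsFiniteMeasure μ] (hV : totalVol μ ≠ 0) {f : α → ℝ}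
    (hf : Integrable f μ) : ∫ x, (f x - avg μ f) ∂μ = 0 := by
  rw [integral_sub hf (integrable_const _), integral_const_eq_totalVol_mul, avg,
    mul_inv_cancel_left₀ hV, sub_self]

lemma integral_pos_of_forall_pos (hμ : totalVol μ ≠ 0) {f : α → ℝ} (hf : Integrable f μ)
    (hpos : ∀ x, 0 < f x) : 0 < ∫ x, f x ∂μ := by
  have hsupp : Function.support f = Set.univ :=
    Set.eq_univ_of_forall fun x => (hpos x).ne'
  rw [integral_pos_iff_support_of_nonneg (fun x => (hpos x).le) hf, hsupp, pos_iff_ne_zero]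
  exact fun h => hμ (by rw [totalVol, h, ENNReal.toReal_zero])

lemma mul_opE {W : α → ℝ} {x : α} (hWx : W x ≠ 0) (g : α → ℝ) :
    W x * opE μ W g x = W x * g x + avg μ g * W x - avg μ (fun y => W y * g y) := by
  simp only [opE]
  field_simp

lemma opGplus_eq_of_mul_eq {W f u : α → ℝ} {κ : ℝ} (hW : Integrable W μ)
    (hW0 : ∫ y, W y ∂μ ≠ 0) (hu : Integrable u μ) (hu0 : ∫ y, u y ∂μ = 0)
    (hf : ∀ y, W y * f y = u y + κ * W y) (x : α) : opGplus μ W f x = u x := by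
  have hint : ∫ y, W y * f y ∂μ = κ * ∫ y, W y ∂μ := by
    simp only [hf, integral_add hu (hW.const_mul κ), hu0, integral_const_mul, zero_add]
  simp only [opGplus]
  rw [hint, hf x]
  field_simp
  ring

lemma mul_opGminus {W : α → ℝ} {x : α} (hWx : W x ≠ 0) (h : α → ℝ) :
    W x * opGminus μ W h x = h x - (∫ y, (W y)⁻¹ * h y ∂μ) / ∫ y, (W y)⁻¹ ∂μ := by
  simp only [opGminus]
  field_simp

lemma integral_opGminus {W h : α → ℝ} (hWinv : Integrable (fun y => (W y)⁻¹) μ)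
    (hWinvh : Integrable (fun y => (W y)⁻¹ * h y) μ) (hWinv0 : ∫ y, (W y)⁻¹ ∂μ ≠ 0) :
    ∫ y, opGminus μ W h y ∂μ = 0 := by
  simp only [opGminus, mul_div_assoc]
  rw [integral_sub hWinvh (hWinv.mul_const _), integral_mul_const, mul_div_cancel₀ _ hWinv0,
    sub_self]

end

theorem opG_intertwining_general
    {α : Type*} [MeasurableSpace α] (μ : Measure α) [IsFiniteMeasure μ]
    (hV : 0 < totalVol μ)
    (W : α → ℝ) (hW : Measurable W)
    (c C : ℝ) (hc : 0 < c)
    (hbound : ∀ x, c ≤ W x ∧ W x ≤ C) :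
    ∀ h : α → ℝ, Integrable h μ → ∀ x,
      (opGplus μ W (opE μ W (fun y => (W y)⁻¹ * h y)) x = h x - avg μ h) ∧
      (W x * opE μ W (opGminus μ W h) x = h x - avg μ h) := by
  intro h hh x
  have hWpos (y : α) : 0 < W y := hc.trans_le (hbound y).1
  have hW0 (y : α) : W y ≠ 0 := (hWpos y).ne'
  have hWle : ∀ᵐ y ∂μ, ‖W y‖ ≤ C := ae_of_all _ fun y => by
    rw [Real.norm_of_nonneg (hWpos y).le]; exact (hbound y).2
  have hWinvle : ∀ᵐ y ∂μ, ‖(W y)⁻¹‖ ≤ c⁻¹ := ae_of_all _ fun y => by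
    rw [Real.norm_of_nonneg (inv_pos.2 (hWpos y)).le]; exact inv_anti₀ hc (hbound y).1
  have hWint : Integrable W μ := .of_bound hW.aestronglyMeasurable C hWle
  have hWinvint : Integrable (fun y => (W y)⁻¹) μ := .of_bound hW.inv.aestronglyMeasurable _ hWinvle
  have hWinvh : Integrable (fun y => (W y)⁻¹ * h y) μ :=
    hh.bdd_mul hW.inv.aestronglyMeasurable hWinvle
  constructor
  · refine opGplus_eq_of_mul_eq (u := fun y => h y - avg μ h)
      (κ := avg μ fun y => (W y)⁻¹ * h y) hWint (integral_pos_of_forall_pos hV.ne' hWint hWpos).ne'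
      (hh.sub (integrable_const _)) (integral_sub_avg hV.ne' hh) (fun y => ?_) x
    simp only [mul_opE (hW0 y), mul_inv_cancel_left₀ (hW0 _)]
    ring
  · have hWG : (fun y => W y * opGminus μ W h y) =
        fun y => h y - (∫ y, (W y)⁻¹ * h y ∂μ) / ∫ y, (W y)⁻¹ ∂μ :=
      funext fun y => mul_opGminus (hW0 y) h
    have hG0 : avg μ (opGminus μ W h) = 0 := by
      rw [avg, integral_opGminus hWinvint hWinvh
        (integral_pos_of_forall_pos hV.ne' hWinvint fun y => inv_pos.2 (hWpos y)).ne', mul_zero]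
    rw [mul_opE (hW0 x), hWG, avg_sub_const hV.ne' hh, hG0, mul_opGminus (hW0 x)]
    ring

/-- Intertwining identities `G₊∘E∘W⁻¹ = Ĩ = W·(E∘G₋)`.
For every integrable `h` and every `x`:
(i) `G₊(E(W⁻¹·h))(x) = h(x) − ⟨h⟩`;
(ii) `W(x)·E(G₋ h)(x) = h(x) − ⟨h⟩`. -/
theorem opG_intertwining
    {α : Type*} [MeasurableSpace α] (μ : Measure α) [IsFiniteMeasure μ]
    (hV : 0 < totalVol μ)
    (W : α → ℝ) (hW : Measurable W)
    (c C : ℝ) (hc : 0 < c) (hcC : c ≤ C)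
    (hbound : ∀ x, c ≤ W x ∧ W x ≤ C) :
    ∀ h : α → ℝ, Integrable h μ → ∀ x,
      (opGplus μ W (opE μ W (fun y => (W y)⁻¹ * h y)) x = h x - avg μ h) ∧
      (W x * opE μ W (opGminus μ W h) x = h x - avg μ h) :=
  opG_intertwining_general μ hV W hW c C hc hbound
end

section
/- (Symmetric form of Ĩ∘B⁻¹∘E_ab⁻¹.) For every integrable h : α → ℝ and every x ∈ α, the average-free part of B⁻¹·(E_ab⁻¹ h) at x equals A(x)·h(x) − A(x)·(∫ A·h dμ)/(∫ A dμ); that is, B(x)⁻¹·(E_ab⁻¹ h)(x) − ⟨B⁻¹·(E_ab⁻¹ h)⟩ = A(x)·h(x) − A(x)·(∫ A·h dμ)/(∫ A dμ). -/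
open MeasureTheory

/-- The generalized delocalization operator `E_ab`:
`(E_ab f)(x) = ⟨f⟩ + A(x)⁻¹·(B(x)⁻¹·f(x) − ⟨B⁻¹·f⟩)`. -/
noncomputable def opEab {α : Type*} [MeasurableSpace α] (μ : Measure α) (A B : α → ℝ)
    (f : α → ℝ) : α → ℝ :=
  fun x => avg μ f + (A x)⁻¹ * ((B x)⁻¹ * f x - avg μ (fun y => (B y)⁻¹ * f y))

/-- The operator `E_ab⁻¹`:
`(E_ab⁻¹ h)(x) = B(x)·A(x)·h(x) − B(x)·A(x)·(∫A·h)/(∫A) − B(x)·(∫B·A·h)/(∫B)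
  + B(x)·((V + ∫B·A)/(∫B))·(∫A·h)/(∫A)`. -/
noncomputable def opEabInv {α : Type*} [MeasurableSpace α] (μ : Measure α) (A B : α → ℝ)
    (h : α → ℝ) : α → ℝ :=
  fun x => B x * A x * h x
    - B x * A x * (∫ y, A y * h y ∂μ) / (∫ y, A y ∂μ)
    - B x * (∫ y, B y * A y * h y ∂μ) / (∫ y, B y ∂μ)
    + B x * ((totalVol μ + ∫ y, B y * A y ∂μ) / (∫ y, B y ∂μ))
        * (∫ y, A y * h y ∂μ) / (∫ y, A y ∂μ)

/-!
Dividing by `B` turns `E_ab⁻¹ h` into `A·h − A·(∫ A·h)/(∫ A)` plus a constant. The first part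
has integral zero, so subtracting the average removes exactly the constant.
-/

section

variable {α : Type*} [MeasurableSpace α] {μ : Measure α}

theorem totalVol_eq_measureReal_univ (μ : Measure α) : totalVol μ = μ.real Set.univ :=
  (measureReal_def μ Set.univ).symm

theorem avg_eq_zero_of_integral_eq_zero {f : α → ℝ} (hf : ∫ x, f x ∂μ = 0) : avg μ f = 0 := by
  simp [avg, hf]

theorem avg_add_const [IsFiniteMeasure μ] (hV : totalVol μ ≠ 0) {f : α → ℝ} (hf : Integrable f μ)
    (k : ℝ) : avg μ (fun x => f x + k) = avg μ f + k := by
  rw [avg, avg, integral_add hf (integrable_const k), integral_const, smul_eq_mul,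
    ← totalVol_eq_measureReal_univ, mul_add, inv_mul_cancel_left₀ hV]

theorem mul_totalVol_le_integral [IsFiniteMeasure μ] {f : α → ℝ} (hf : Integrable f μ) {c : ℝ}
    (hc : ∀ x, c ≤ f x) : c * totalVol μ ≤ ∫ x, f x ∂μ := by
  have := integral_mono (integrable_const c) hf hc
  rwa [integral_const, smul_eq_mul, mul_comm, ← totalVol_eq_measureReal_univ] at this

theorem integral_sub_mul_div_integral_eq_zero {A g : α → ℝ} (hA : Integrable A μ)
    (hg : Integrable g μ) (hA₀ : ∫ y, A y ∂μ ≠ 0) :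
    ∫ y, (g y - A y * (∫ z, g z ∂μ) / (∫ z, A z ∂μ)) ∂μ = 0 := by
  simp_rw [mul_div_assoc]
  rw [integral_sub hg (hA.mul_const _), integral_mul_const, mul_div_cancel₀ _ hA₀, sub_self]

end

theorem inv_mul_opEabInv_apply {α : Type*} [MeasurableSpace α] (μ : Measure α) (A B h : α → ℝ)
    {y : α} (hy : B y ≠ 0) :
    (B y)⁻¹ * opEabInv μ A B h y
      = (A y * h y - A y * (∫ z, A z * h z ∂μ) / (∫ z, A z ∂μ))
        + (-(∫ z, B z * A z * h z ∂μ) / (∫ z, B z ∂μ)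
          + (totalVol μ + ∫ z, B z * A z ∂μ) / (∫ z, B z ∂μ)
            * (∫ z, A z * h z ∂μ) / (∫ z, A z ∂μ)) := by
  simp only [opEabInv]
  field_simp
  ring

theorem opEabInv_symmetric_form_general
    {α : Type*} [MeasurableSpace α] (μ : Measure α) [IsFiniteMeasure μ]
    (hV : 0 < totalVol μ)
    (A B : α → ℝ) (hA : Measurable A)
    (c C : ℝ) (hc : 0 < c)
    (hboundA : ∀ x, c ≤ A x ∧ A x ≤ C) (hboundB : ∀ x, c ≤ B x ∧ B x ≤ C) :
    ∀ h : α → ℝ, Integrable h μ → ∀ x,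
      (B x)⁻¹ * opEabInv μ A B h x - avg μ (fun y => (B y)⁻¹ * opEabInv μ A B h y)
        = A x * h x - A x * (∫ y, A y * h y ∂μ) / (∫ y, A y ∂μ) := by
  intro h hh x
  have hB₀ : ∀ y, B y ≠ 0 := fun y => (hc.trans_le (hboundB y).1).ne'
  have hA_norm : ∀ᵐ y ∂μ, ‖A y‖ ≤ C := ae_of_all _ fun y =>
    abs_le.2 ⟨by linarith [(hboundA y).1, (hboundA y).2], (hboundA y).2⟩
  have hAint : Integrable A μ := .of_bound hA.aestronglyMeasurable C hA_norm
  have hAh : Integrable (fun y => A y * h y) μ := hh.bdd_mul hA.aestronglyMeasurable hA_norm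
  have hA₀ : ∫ y, A y ∂μ ≠ 0 :=
    ((mul_pos hc hV).trans_le (mul_totalVol_le_integral hAint fun y => (hboundA y).1)).ne'
  have hcentered : Integrable
      (fun y => A y * h y - A y * (∫ z, A z * h z ∂μ) / (∫ z, A z ∂μ)) μ :=
    hAh.sub ((hAint.mul_const _).div_const _)
  simp_rw [inv_mul_opEabInv_apply μ A B h (hB₀ _)]
  rw [avg_add_const hV.ne' hcentered,
    avg_eq_zero_of_integral_eq_zero (integral_sub_mul_div_integral_eq_zero hAint hAh hA₀)]
  ring

/-- Symmetric form of `Ĩ∘B⁻¹∘E_ab⁻¹`.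
For every integrable `h` and every `x`:
`B(x)⁻¹·(E_ab⁻¹ h)(x) − ⟨B⁻¹·(E_ab⁻¹ h)⟩ = A(x)·h(x) − A(x)·(∫ A·h dμ)/(∫ A dμ)`. -/
theorem opEabInv_symmetric_form
    {α : Type*} [MeasurableSpace α] (μ : Measure α) [IsFiniteMeasure μ]
    (hV : 0 < totalVol μ)
    (A B : α → ℝ) (hA : Measurable A) (hB : Measurable B)
    (c C : ℝ) (hc : 0 < c) (hcC : c ≤ C)
    (hboundA : ∀ x, c ≤ A x ∧ A x ≤ C) (hboundB : ∀ x, c ≤ B x ∧ B x ≤ C) :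
    ∀ h : α → ℝ, Integrable h μ → ∀ x,
      (B x)⁻¹ * opEabInv μ A B h x - avg μ (fun y => (B y)⁻¹ * opEabInv μ A B h y)
        = A x * h x - A x * (∫ y, A y * h y ∂μ) / (∫ y, A y ∂μ) :=
  opEabInv_symmetric_form_general μ hV A B hA c C hc hboundA hboundB
end
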